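/- Let $\mathcal{A} \subseteq \mathbb{R}^p$ be a compact set of atoms whose conic hull is all of $\mathbb{R}^p$, with atomic norm $\|x\|_{\mathcal{A}} = \inf\{\sum_a c_a : x = \sum_a c_a a, c_a \ge 0\}$, tangent cone $T(x^\star) = \mathrm{cone}\{z - x^\star : \|z\|_{\mathcal{A}} \le \|x^\star\|_{\mathcal{A}}\}$ at a point $x^\star \ne 0$, and linear map $\Phi : \mathbb{R}^p \to \mathbb{R}^n$ with $y = \Phi x^\star$. Then $x^\star$ is the unique minimizer of $\min_x \{\|x\|_{\mathcal{A}} : \Phi x = y\}$ if and only if $\ker(\Phi) \cap T(x^\star) = \{0\}$. -/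
import Mathlib


/-- The atomic norm (gauge) associated with a set of atoms `A ⊆ ℝ^p`: the infimum of
`∑ c_a` over finite conic combinations `x = ∑ c_a a` with atoms `a ∈ A`, `c_a ≥ 0`. -/
noncomputable def atomicNorm {p : ℕ} (A : Set (EuclideanSpace ℝ (Fin p)))
    (x : EuclideanSpace ℝ (Fin p)) : ℝ :=
  sInf {s : ℝ | ∃ (m : ℕ) (c : Fin m → ℝ) (a : Fin m → EuclideanSpace ℝ (Fin p)),
    (∀ j, 0 ≤ c j ∧ a j ∈ A) ∧ x = ∑ j, c j • a j ∧ s = ∑ j, c j}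

/-- Prop. 2.1 of Chandrasekaran et al.: for a compact atomic set `A` whose
conic hull is all of `ℝ^p`, a point `x⋆ ≠ 0`, and a linear map `Φ : ℝ^p → ℝ^n` with
`y = Φ x⋆`, `x⋆` is the unique minimizer of `min {‖x‖_𝒜 : Φ x = y}` if and only if
`ker(Φ) ∩ T_𝒜(x⋆) = {0}`, where `T_𝒜(x⋆)` is the tangent cone
`cone {z - x⋆ : ‖z‖_𝒜 ≤ ‖x⋆‖_𝒜}`. -/
theorem unique_minimizer_iff_nullspace_inter_tangentCone {p n : ℕ}
    (A : Set (EuclideanSpace ℝ (Fin p))) (hA : IsCompact A)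
    (hspan : ∀ x : EuclideanSpace ℝ (Fin p), ∃ (m : ℕ) (c : Fin m → ℝ)
      (a : Fin m → EuclideanSpace ℝ (Fin p)),
      (∀ j, 0 ≤ c j ∧ a j ∈ A) ∧ x = ∑ j, c j • a j)
    (xstar : EuclideanSpace ℝ (Fin p)) (hx0 : xstar ≠ 0)
    (Φ : EuclideanSpace ℝ (Fin p) →ₗ[ℝ] EuclideanSpace ℝ (Fin n)) :
    (∀ x : EuclideanSpace ℝ (Fin p), Φ x = Φ xstar → x ≠ xstar →
        atomicNorm A xstar < atomicNorm A x) ↔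
    ({w : EuclideanSpace ℝ (Fin p) | Φ w = 0} ∩
      {w : EuclideanSpace ℝ (Fin p) | ∃ c : ℝ, 0 ≤ c ∧ ∃ z : EuclideanSpace ℝ (Fin p),
        atomicNorm A z ≤ atomicNorm A xstar ∧ w = c • (z - xstar)} = {0}) := by
  constructor
  · intro h
    ext w
    simp only [Set.mem_inter_iff, Set.mem_setOf_eq, Set.mem_singleton_iff]
    constructor
    · rintro ⟨hw0, c, hc, z, hz, rfl⟩
      rcases eq_or_lt_of_le hc with rfl | hcpos
      · simp
      by_cases hzx : z = xstar
      · simp [hzx]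
      · exfalso
        have hΦ : Φ z = Φ xstar := by
          have : c • (Φ z - Φ xstar) = 0 := by
            simpa [map_sub, smul_sub] using hw0
          have := smul_eq_zero.mp this
          rcases this with h1 | h2
          · exact absurd h1 (ne_of_gt hcpos)
          · exact sub_eq_zero.mp h2
        exact absurd hz (not_le.mpr (h z hΦ hzx))
    · rintro rfl
      exact ⟨map_zero Φ, 0, le_refl 0, xstar, le_refl _, by simp⟩
  · intro h x hΦx hne
    by_contra hlt
    push_neg at hlt
    have hw : (x - xstar) ∈ ({w : EuclideanSpace ℝ (Fin p) | Φ w = 0} ∩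
      {w : EuclideanSpace ℝ (Fin p) | ∃ c : ℝ, 0 ≤ c ∧ ∃ z : EuclideanSpace ℝ (Fin p),
        atomicNorm A z ≤ atomicNorm A xstar ∧ w = c • (z - xstar)}) := by
      refine ⟨by simp [map_sub, hΦx], 1, zero_le_one, x, hlt, by simp⟩
    rw [h] at hw
    exact hne (sub_eq_zero.mp hw)
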